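/- arXiv:1701.01764 — 7 statements merged into one kernel-verified Lean document; each statement's English description precedes it below -/
import Mathlib

section
/- Positivity of the strict-completeness constant: Let E_1, …, E_N be d×d complex matrices with measurement map M(X) = (Tr(E_1 X), …, Tr(E_N X)), and suppose the family is rank-r strictly-complete, i.e. for every PSD X₁ with rank(X₁) ≤ r and every PSD X₂, M(X₁) = M(X₂) implies X₁ = X₂. Then there exists a constant α > 0 such that α‖X₁ − X₂‖₂ ≤ ‖M(X₁) − M(X₂)‖₂ for every PSD X₁ with rank(X₁) ≤ r and every PSD X₂. -/
open Matrix
open scoped ComplexOrder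

/-- The measurement map of a family of operators: `X ↦ (Tr(E₁ X), …, Tr(E_N X))`. -/
noncomputable def measMap {d N : ℕ} (E : Fin N → Matrix (Fin d) (Fin d) ℂ)
    (X : Matrix (Fin d) (Fin d) ℂ) : Fin N → ℂ :=
  fun μ => (E μ * X).trace

/-- The ℓ₂-norm of a vector in ℂ^N : `‖v‖₂ = √(Σ_μ |v_μ|²)`. -/
noncomputable def vnorm {N : ℕ} (v : Fin N → ℂ) : ℝ :=
  Real.sqrt (∑ μ, ‖v μ‖ ^ 2)

/-- The Frobenius (Hilbert–Schmidt) norm of a matrix: `‖X‖₂ = √Tr(X†X)`. -/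
noncomputable def fnorm {d : ℕ} (X : Matrix (Fin d) (Fin d) ℂ) : ℝ :=
  Real.sqrt ((Xᴴ * X).trace.re)

/-!
Write `Δ = X₁ - X₂`. Since `X₁ - Δ = X₂ ≥ 0`, `Δ` is nonpositive on `ker X₁`, so it has at most
`rank X₁ ≤ r` positive eigenvalues; splitting its spectrum into positive and negative parts gives
`Δ = V Vᴴ - W Wᴴ` with `V` of width `r` and `‖V Vᴴ‖, ‖W Wᴴ‖ ≤ ‖Δ‖`. After normalising `‖Δ‖ = 1`
the factors `V`, `W` range over a compact set, on which `‖M(V Vᴴ - W Wᴴ)‖` is continuous and, by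
strict completeness, never zero; its minimum is `α`.
-/

attribute [local instance] Matrix.frobeniusNormedAddCommGroup Matrix.frobeniusNormedSpace

open Metric

theorem exists_pos_mul_norm_le_of_isCompact {E : Type*} [NormedAddCommGroup E] [NormedSpace ℝ E]
    {g : E → ℝ} (hg : Continuous g) (hg_smul : ∀ (c : ℝ) (x : E), 0 ≤ c → g (c • x) = c * g x)
    {K : Set E} (hK : IsCompact K) (hgK : ∀ x ∈ K, 0 < g x) :
    ∃ α > 0, ∀ x, (x ≠ 0 → ‖x‖⁻¹ • x ∈ K) → α * ‖x‖ ≤ g x := by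
  obtain ⟨α, hα, hαK⟩ := hK.exists_forall_le' hg.continuousOn hgK
  refine ⟨α, hα, fun x hx => ?_⟩
  rcases eq_or_ne x 0 with rfl | hx0
  · simpa using (hg_smul 0 0 le_rfl).ge
  · have h := hαK _ (hx hx0)
    rwa [hg_smul _ _ (by positivity), le_inv_mul_iff₀ (norm_pos_iff.mpr hx0), mul_comm] at h

namespace Matrix

section Frobenius

variable {m n : Type*} [Fintype m] [Fintype n]

theorem frobenius_norm_sq_eq_re_trace (A : Matrix m n ℂ) : ‖A‖ ^ 2 = (A * Aᴴ).trace.re := by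
  rw [frobenius_norm_def, ← Real.rpow_natCast, ← Real.rpow_mul (by positivity)]
  norm_num
  simp only [trace, diag, mul_apply, conjTranspose_apply, Complex.re_sum]
  refine Finset.sum_congr rfl fun i _ => Finset.sum_congr rfl fun j _ => ?_
  rw [Complex.star_def, Complex.mul_conj, Complex.normSq_eq_norm_sq, Complex.ofReal_re]

theorem frobenius_norm_sq_eq_re_trace' (A : Matrix m n ℂ) : ‖A‖ ^ 2 = (Aᴴ * A).trace.re := by
  rw [← frobenius_norm_conjTranspose, frobenius_norm_sq_eq_re_trace, conjTranspose_conjTranspose]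

theorem frobenius_norm_add_sq_of_conjTranspose_mul_eq_zero {A B : Matrix m n ℂ}
    (h : Aᴴ * B = 0) : ‖A + B‖ ^ 2 = ‖A‖ ^ 2 + ‖B‖ ^ 2 := by
  have h' : Bᴴ * A = 0 := by
    rw [← conjTranspose_conjTranspose (Bᴴ * A), conjTranspose_mul, conjTranspose_conjTranspose, h,
      conjTranspose_zero]
  simp only [frobenius_norm_sq_eq_re_trace', conjTranspose_add, Matrix.add_mul, Matrix.mul_add, h,
    h', add_zero, zero_add, trace_add, Complex.add_re]

theorem norm_apply_le_frobenius_norm (A : Matrix m n ℂ) (i : m) (j : n) : ‖A i j‖ ≤ ‖A‖ := by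
  change ‖A i j‖ ≤ ‖WithLp.toLp 2 fun i => WithLp.toLp 2 (A i)‖
  exact (PiLp.norm_apply_le (WithLp.toLp 2 (A i)) j).trans
    (PiLp.norm_apply_le (WithLp.toLp 2 fun i => WithLp.toLp 2 (A i)) i)

theorem frobenius_norm_sq_le_card_mul_norm_mul_conjTranspose (B : Matrix m n ℂ) :
    ‖B‖ ^ 2 ≤ Fintype.card m * ‖B * Bᴴ‖ := by
  rw [frobenius_norm_sq_eq_re_trace, trace, Complex.re_sum]
  calc ∑ i, ((B * Bᴴ).diag i).re ≤ ∑ _i : m, ‖B * Bᴴ‖ :=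
        Finset.sum_le_sum fun i _ => (Complex.re_le_norm _).trans (norm_apply_le_frobenius_norm _ i i)
    _ = _ := by simp

end Frobenius

variable {m n p : Type*} [Fintype n] [Fintype p]

theorem rank_real_smul_le [Fintype m] [DecidableEq m] (c : ℝ) (A : Matrix m n ℂ) :
    (c • A).rank ≤ A.rank := by
  simpa using rank_mul_le_right (c • (1 : Matrix m m ℂ)) A

/-- Columns outside `q` vanish, so a partial isometry `J` onto `p` satisfies `B J Jᴴ = B`. -/
theorem exists_mul_conjTranspose_eq_of_card_le {R : Type*} [CommSemiring R] [StarRing R]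
    (B : Matrix m n R) (q : n → Prop) [DecidablePred q]
    (hB : ∀ i k, ¬ q k → B i k = 0) (hq : Fintype.card {k // q k} ≤ Fintype.card p) :
    ∃ V : Matrix m p R, V * Vᴴ = B * Bᴴ := by
  classical
  obtain ⟨e⟩ := Function.Embedding.nonempty_of_card_le hq
  let J : Matrix n p R := of fun k j => if h : q k then (if e ⟨k, h⟩ = j then 1 else 0) else 0
  have hJ : J * Jᴴ = diagonal fun k => if q k then 1 else 0 := by
    ext k l
    obtain rfl | hkl := eq_or_ne k l
    · by_cases hk : q k <;> simp [J, mul_apply, hk]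
    · by_cases hk : q k <;> by_cases hl : q l <;>
        simp [J, mul_apply, hk, hl, hkl, hkl.symm, Subtype.ext_iff, e.injective.eq_iff]
  have hBJ : B * (J * Jᴴ) = B := by
    ext i k
    by_cases hk : q k <;> simp [hJ, hk, hB]
  exact ⟨B * J, by rw [conjTranspose_mul, ← Matrix.mul_assoc, Matrix.mul_assoc B J, hBJ]⟩

section Spectral

variable [DecidableEq n]

theorem mul_diagonal_sqrt_mul_conjTranspose (U : Matrix n n ℂ) {w : n → ℝ} (hw : 0 ≤ w) :
    (U * diagonal fun i => (√(w i) : ℂ)) * (U * diagonal fun i => (√(w i) : ℂ))ᴴ =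
      U * diagonal (fun i => (w i : ℂ)) * Uᴴ := by
  rw [conjTranspose_mul, diagonal_conjTranspose, Matrix.mul_assoc, ← Matrix.mul_assoc (diagonal _),
    diagonal_mul_diagonal, ← Matrix.mul_assoc]
  congr 3
  ext i
  rw [Pi.star_apply, Complex.star_def, Complex.conj_ofReal, ← Complex.ofReal_mul,
    Real.mul_self_sqrt (hw i)]

/-- The principal submatrix of `A` on `{i | 0 < w i}` dominates a positive diagonal matrix, so it
is invertible. -/
theorem card_pos_le_rank_of_posSemidef_sub_diagonal {A : Matrix n n ℂ} {w : n → ℝ}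
    (h : (A - diagonal fun i => (w i : ℂ)).PosSemidef) :
    Fintype.card {i // 0 < w i} ≤ A.rank := by
  let e : {i // 0 < w i} → n := Subtype.val
  have hD : (diagonal ((fun i => (w i : ℂ)) ∘ e)).PosDef :=
    posDef_diagonal_iff.mpr fun i => Complex.zero_lt_real.mpr i.2
  have hsub : (A.submatrix e e).PosDef := by
    rw [← submatrix_diagonal _ e Subtype.val_injective] at hD
    convert PosDef.posSemidef_add (h.submatrix e) hD using 1
    ext i j
    simp
  calc Fintype.card {i // 0 < w i} = (A.submatrix e e).rank := (rank_of_isUnit _ hsub.isUnit).symm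
    _ ≤ A.rank := rank_submatrix_le _ _ _

namespace IsHermitian

variable {H : Matrix n n ℂ} (hH : H.IsHermitian)

theorem card_pos_eigenvalues_le_rank {A : Matrix n n ℂ} (hA : (A - H).PosSemidef) :
    Fintype.card {i // 0 < hH.eigenvalues i} ≤ A.rank := by
  let U : Matrix n n ℂ := hH.eigenvectorUnitary
  have hdiag : Uᴴ * H * U = diagonal fun i => (hH.eigenvalues i : ℂ) := by
    simpa [U, star_eq_conjTranspose, Function.comp_def] using
      hH.conjStarAlgAut_star_eigenvectorUnitary
  have hconj : (Uᴴ * A * U - diagonal fun i => (hH.eigenvalues i : ℂ)).PosSemidef := by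
    rw [← hdiag, ← Matrix.sub_mul, ← Matrix.mul_sub]
    exact hA.conjTranspose_mul_mul_same U
  calc _ ≤ (Uᴴ * A * U).rank := card_pos_le_rank_of_posSemidef_sub_diagonal hconj
    _ ≤ (Uᴴ * A).rank := rank_mul_le_left _ _
    _ ≤ A.rank := rank_mul_le_right _ _

noncomputable def eigenFactor (g : ℝ → ℝ) : Matrix n n ℂ :=
  (hH.eigenvectorUnitary : Matrix n n ℂ) * diagonal fun i => (√(g (hH.eigenvalues i)) : ℂ)

theorem eigenFactor_mul_conjTranspose {g : ℝ → ℝ} (hg : ∀ x, 0 ≤ g x) :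
    hH.eigenFactor g * (hH.eigenFactor g)ᴴ = (hH.eigenvectorUnitary : Matrix n n ℂ) *
      diagonal (fun i => (g (hH.eigenvalues i) : ℂ)) * (hH.eigenvectorUnitary : Matrix n n ℂ)ᴴ :=
  mul_diagonal_sqrt_mul_conjTranspose _ fun _ => hg _

theorem eigenFactor_posPart_sub_negPart :
    hH.eigenFactor (·⁺) * (hH.eigenFactor (·⁺))ᴴ - hH.eigenFactor (·⁻) * (hH.eigenFactor (·⁻))ᴴ
      = H := by
  rw [eigenFactor_mul_conjTranspose _ fun x => posPart_nonneg x,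
    eigenFactor_mul_conjTranspose _ fun x => negPart_nonneg x, ← Matrix.sub_mul, ← Matrix.mul_sub,
    diagonal_sub]
  conv_rhs => rw [hH.spectral_theorem]
  simp [← Complex.ofReal_sub, posPart_sub_negPart, star_eq_conjTranspose, Function.comp_def]

theorem conjTranspose_eigenFactor_posPart_mul_negPart :
    (hH.eigenFactor (·⁺) * (hH.eigenFactor (·⁺))ᴴ)ᴴ *
      (hH.eigenFactor (·⁻) * (hH.eigenFactor (·⁻))ᴴ) = 0 := by
  have hU : (hH.eigenvectorUnitary : Matrix n n ℂ)ᴴ * hH.eigenvectorUnitary = 1 := by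
    simp [← star_eq_conjTranspose]
  have hpn : ∀ x : ℝ, x⁺ * x⁻ = 0 := fun x => by
    rcases le_total x 0 with h | h
    · rw [posPart_eq_zero.mpr h, zero_mul]
    · rw [negPart_eq_zero.mpr h, mul_zero]
  rw [conjTranspose_mul, conjTranspose_conjTranspose,
    eigenFactor_mul_conjTranspose _ fun x => posPart_nonneg x,
    eigenFactor_mul_conjTranspose _ fun x => negPart_nonneg x]
  simp only [Matrix.mul_assoc]
  rw [← Matrix.mul_assoc _ (hH.eigenvectorUnitary : Matrix n n ℂ), hU, Matrix.one_mul,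
    ← Matrix.mul_assoc (diagonal _), diagonal_mul_diagonal]
  simp [← Complex.ofReal_mul, hpn]

theorem norm_sq_eq_norm_eigenFactor_posPart_add_negPart :
    ‖H‖ ^ 2 = ‖hH.eigenFactor (·⁺) * (hH.eigenFactor (·⁺))ᴴ‖ ^ 2 +
      ‖hH.eigenFactor (·⁻) * (hH.eigenFactor (·⁻))ᴴ‖ ^ 2 := by
  conv_lhs => rw [← hH.eigenFactor_posPart_sub_negPart, sub_eq_add_neg]
  rw [frobenius_norm_add_sq_of_conjTranspose_mul_eq_zero, norm_neg]
  rw [Matrix.mul_neg, conjTranspose_eigenFactor_posPart_mul_negPart, neg_zero]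

theorem eigenFactor_posPart_apply_of_nonpos (i : n) {k : n} (hk : hH.eigenvalues k ≤ 0) :
    hH.eigenFactor (·⁺) i k = 0 := by
  simp [eigenFactor, mul_diagonal, posPart_eq_zero.mpr hk]

theorem exists_eq_sub_of_card_pos_eigenvalues_le
    (hcard : Fintype.card {i // 0 < hH.eigenvalues i} ≤ Fintype.card p) :
    ∃ (V : Matrix n p ℂ) (W : Matrix n n ℂ), H = V * Vᴴ - W * Wᴴ ∧
      ‖V‖ ^ 2 ≤ Fintype.card n * ‖H‖ ∧ ‖W‖ ^ 2 ≤ Fintype.card n * ‖H‖ := by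
  set P := hH.eigenFactor (·⁺) * (hH.eigenFactor (·⁺))ᴴ
  set Q := hH.eigenFactor (·⁻) * (hH.eigenFactor (·⁻))ᴴ
  obtain ⟨V, hV⟩ := exists_mul_conjTranspose_eq_of_card_le (hH.eigenFactor (·⁺))
    (fun k => 0 < hH.eigenvalues k)
    (fun i k hk => hH.eigenFactor_posPart_apply_of_nonpos i (not_lt.mp hk)) hcard
  have hsq := hH.norm_sq_eq_norm_eigenFactor_posPart_add_negPart
  have hP : ‖P‖ ≤ ‖H‖ := (sq_le_sq₀ (norm_nonneg _) (norm_nonneg _)).mp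
    (hsq ▸ le_add_of_nonneg_right (sq_nonneg _))
  have hQ : ‖Q‖ ≤ ‖H‖ := (sq_le_sq₀ (norm_nonneg _) (norm_nonneg _)).mp
    (hsq ▸ le_add_of_nonneg_left (sq_nonneg _))
  refine ⟨V, hH.eigenFactor (·⁻), by rw [hV, hH.eigenFactor_posPart_sub_negPart], ?_, ?_⟩
  · calc ‖V‖ ^ 2 ≤ Fintype.card n * ‖V * Vᴴ‖ :=
          frobenius_norm_sq_le_card_mul_norm_mul_conjTranspose V
      _ ≤ _ := by rw [hV]; gcongr
  · calc _ ≤ (Fintype.card n : ℝ) * ‖Q‖ := frobenius_norm_sq_le_card_mul_norm_mul_conjTranspose _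
      _ ≤ _ := by gcongr

end IsHermitian

theorem exists_sub_eq_mul_conjTranspose_sub_mul_conjTranspose {X₁ X₂ : Matrix n n ℂ}
    (h₁ : X₁.IsHermitian) (hr : X₁.rank ≤ Fintype.card p) (h₂ : X₂.PosSemidef) :
    ∃ (V : Matrix n p ℂ) (W : Matrix n n ℂ), X₁ - X₂ = V * Vᴴ - W * Wᴴ ∧
      ‖V‖ ^ 2 ≤ Fintype.card n * ‖X₁ - X₂‖ ∧ ‖W‖ ^ 2 ≤ Fintype.card n * ‖X₁ - X₂‖ := by
  have hΔ := h₁.sub h₂.1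
  refine hΔ.exists_eq_sub_of_card_pos_eigenvalues_le ((hΔ.card_pos_eigenvalues_le_rank ?_).trans hr)
  rwa [sub_sub_cancel]

end Spectral

variable (n p) in
def unitGramDiffs : Set (Matrix n n ℂ) :=
  (fun VW : Matrix n p ℂ × Matrix n n ℂ => VW.1 * VW.1ᴴ - VW.2 * VW.2ᴴ) ''
    (closedBall 0 √(Fintype.card n) ×ˢ closedBall 0 √(Fintype.card n)) ∩ sphere 0 1

theorem isCompact_unitGramDiffs : IsCompact (unitGramDiffs n p) :=
  (((isCompact_closedBall _ _).prod (isCompact_closedBall _ _)).image (by fun_prop)).inter_right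
    isClosed_sphere

theorem inv_norm_smul_sub_mem_unitGramDiffs [DecidableEq n] {X₁ X₂ : Matrix n n ℂ}
    (h₁ : X₁.IsHermitian) (hr : X₁.rank ≤ Fintype.card p) (h₂ : X₂.PosSemidef) (hne : X₁ ≠ X₂) :
    ‖X₁ - X₂‖⁻¹ • (X₁ - X₂) ∈ unitGramDiffs n p := by
  set t := ‖X₁ - X₂‖
  have ht : 0 ≤ t⁻¹ := inv_nonneg.mpr (norm_nonneg _)
  have hnorm : ‖t⁻¹ • X₁ - t⁻¹ • X₂‖ = 1 := by
    rw [← smul_sub, norm_smul, Real.norm_of_nonneg ht,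
      inv_mul_cancel₀ (norm_ne_zero_iff.mpr (sub_ne_zero.mpr hne))]
  obtain ⟨V, W, hVW, hV, hW⟩ := exists_sub_eq_mul_conjTranspose_sub_mul_conjTranspose (p := p)
    (h₁.smul (IsSelfAdjoint.all t⁻¹)) ((rank_real_smul_le _ _).trans hr) (h₂.smul ht)
  rw [hnorm, mul_one] at hV hW
  refine ⟨⟨(V, W), ⟨?_, ?_⟩, by rw [smul_sub, hVW]⟩, by rw [mem_sphere_zero_iff_norm, smul_sub, hnorm]⟩
  · exact mem_closedBall_zero_iff.mpr (Real.le_sqrt_of_sq_le hV)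
  · exact mem_closedBall_zero_iff.mpr (Real.le_sqrt_of_sq_le hW)

end Matrix

theorem fnorm_eq_norm {d : ℕ} (X : Matrix (Fin d) (Fin d) ℂ) : fnorm X = ‖X‖ := by
  rw [fnorm, ← frobenius_norm_sq_eq_re_trace', Real.sqrt_sq (norm_nonneg _)]

theorem vnorm_eq_norm {N : ℕ} (v : Fin N → ℂ) :
    vnorm v = ‖(WithLp.toLp 2 v : EuclideanSpace ℂ (Fin N))‖ :=
  (EuclideanSpace.norm_eq _).symm

theorem vnorm_pos_iff {N : ℕ} {v : Fin N → ℂ} : 0 < vnorm v ↔ v ≠ 0 := by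
  rw [vnorm_eq_norm, norm_pos_iff, ne_eq, ne_eq, WithLp.toLp_eq_zero]

section measMap

variable {d N : ℕ} (E : Fin N → Matrix (Fin d) (Fin d) ℂ)

theorem measMap_sub (X Y : Matrix (Fin d) (Fin d) ℂ) :
    measMap E (X - Y) = measMap E X - measMap E Y := by
  ext μ
  simp [measMap, Matrix.mul_sub]

theorem vnorm_measMap_smul (c : ℝ) (X : Matrix (Fin d) (Fin d) ℂ) (hc : 0 ≤ c) :
    vnorm (measMap E (c • X)) = c * vnorm (measMap E X) := by
  have : measMap E (c • X) = c • measMap E X := by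
    ext μ
    simp [measMap]
  rw [vnorm_eq_norm, vnorm_eq_norm, this, WithLp.toLp_smul, norm_smul, Real.norm_of_nonneg hc]

theorem continuous_vnorm_measMap : Continuous fun X => vnorm (measMap E X) := by
  unfold vnorm measMap
  fun_prop

end measMap

/-- **Positivity of the strict-completeness constant.** If a measurement family is rank-`r`
strictly-complete, then there is a strictly positive constant `α` with
`α‖X₁ − X₂‖₂ ≤ ‖M(X₁) − M(X₂)‖₂` for every PSD `X₁` of rank ≤ r and every PSD `X₂`. -/
theorem strict_completeness_constant_pos {d N r : ℕ} (E : Fin N → Matrix (Fin d) (Fin d) ℂ)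
    (hsc : ∀ X₁ X₂ : Matrix (Fin d) (Fin d) ℂ, X₁.PosSemidef → X₁.rank ≤ r →
      X₂.PosSemidef → measMap E X₁ = measMap E X₂ → X₁ = X₂) :
    ∃ α : ℝ, 0 < α ∧
      ∀ X₁ X₂ : Matrix (Fin d) (Fin d) ℂ, X₁.PosSemidef → X₁.rank ≤ r → X₂.PosSemidef →
        α * fnorm (X₁ - X₂) ≤ vnorm (measMap E X₁ - measMap E X₂) := by
  have hpos : ∀ X ∈ unitGramDiffs (Fin d) (Fin r), 0 < vnorm (measMap E X) := by
    rintro _ ⟨⟨⟨V, W⟩, -, rfl⟩, hX⟩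
    dsimp only at hX ⊢
    rw [vnorm_pos_iff, measMap_sub, sub_ne_zero]
    intro h
    have hrank : (V * Vᴴ).rank ≤ r := (rank_mul_le_left _ _).trans (rank_le_width V)
    rw [hsc _ _ (posSemidef_self_mul_conjTranspose V) hrank
      (posSemidef_self_mul_conjTranspose W) h, sub_self] at hX
    simp at hX
  obtain ⟨α, hα, hle⟩ := exists_pos_mul_norm_le_of_isCompact (continuous_vnorm_measMap E)
    (vnorm_measMap_smul E) isCompact_unitGramDiffs hpos
  refine ⟨α, hα, fun X₁ X₂ h₁ hr h₂ => ?_⟩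
  rw [fnorm_eq_norm, ← measMap_sub]
  exact hle _ fun hne => inv_norm_smul_sub_mem_unitGramDiffs h₁.1 (by simpa using hr) h₂
    (sub_ne_zero.mp hne)
end

section
/- Strict-completeness of the rank-r Flammia-type measurement (matrix form): Let ρ = [[A, B†],[B, C]] be a PSD (p+m)×(p+m) complex block matrix whose leading p×p block A is invertible and with rank(ρ) ≤ p. If σ = [[A, B†],[B, D]] is PSD (i.e. σ agrees with ρ on the first p rows and columns) and Tr(σ) = Tr(ρ), then σ = ρ (equivalently D = C). -/
open Matrix
open scoped ComplexOrder

/-!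
Since `σ` is positive semidefinite, so is its corner `A`, which is therefore positive definite,
and so is the Schur complement `D - B A⁻¹ B†`. Guttman's rank formula
`rank ρ = rank A + rank (C - B A⁻¹ B†)` with `rank A = p ≥ rank ρ` forces `C = B A⁻¹ B†`.
Hence `D - C` is positive semidefinite with trace `Tr σ - Tr ρ = 0`, so `D = C`.
-/

open Module

theorem Submodule.finrank_prod {K V W : Type*} [Field K] [AddCommGroup V] [Module K V]
    [AddCommGroup W] [Module K W] [FiniteDimensional K V] [FiniteDimensional K W]
    (p : Submodule K V) (q : Submodule K W) :
    finrank K (p.prod q) = finrank K p + finrank K q := by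
  rw [← Module.finrank_prod]
  exact LinearEquiv.finrank_eq
    { toFun x := (⟨x.1.1, x.2.1⟩, ⟨x.1.2, x.2.2⟩)
      invFun y := ⟨(y.1, y.2), y.1.2, y.2.2⟩
      map_add' _ _ := rfl
      map_smul' _ _ := rfl }

namespace Matrix

theorem trace_fromBlocks {R m n : Type*} [AddCommMonoid R] [Fintype m] [Fintype n]
    (A : Matrix m m R) (B : Matrix m n R) (C : Matrix n m R) (D : Matrix n n R) :
    (fromBlocks A B C D).trace = A.trace + D.trace := by
  simp [trace, Fintype.sum_sum_type]

section Field

variable {K : Type*} [Field K]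

theorem eq_zero_of_rank_eq_zero {m n : Type*} [Fintype m] [Fintype n] {M : Matrix m n K}
    (h : M.rank = 0) : M = 0 := by
  rw [rank, Submodule.finrank_eq_zero, LinearMap.range_eq_bot] at h
  exact ext_iff_mulVec.mpr fun v ↦ by simpa using LinearMap.congr_fun h v

theorem rank_fromBlocks_zero_zero {m₁ n₁ m₂ n₂ : Type*}
    [Fintype m₁] [Fintype n₁] [Fintype m₂] [Fintype n₂]
    (A : Matrix m₁ n₁ K) (D : Matrix m₂ n₂ K) :
    (fromBlocks A 0 0 D).rank = A.rank + D.rank := by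
  let eDom := LinearEquiv.sumArrowLequivProdArrow n₁ n₂ K K
  let eCod := LinearEquiv.sumArrowLequivProdArrow m₁ m₂ K K
  have hconj : (fromBlocks A 0 0 D).mulVecLin =
      eCod.symm.toLinearMap ∘ₗ A.mulVecLin.prodMap D.mulVecLin ∘ₗ eDom.toLinearMap := by
    ext x (i | i) <;> simp [eDom, eCod, fromBlocks_mulVec] <;> rfl
  rw [rank, hconj, LinearMap.range_comp,
    LinearMap.range_comp_of_range_eq_top _ (LinearEquiv.range eDom), LinearEquiv.finrank_map_eq,
    LinearMap.range_prodMap, Submodule.finrank_prod, rank, rank]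

variable {m n : Type*} [Fintype m] [Fintype n] [DecidableEq m] [DecidableEq n]

theorem rank_fromBlocks_of_invertible₁₁ (A : Matrix m m K) (B : Matrix m n K)
    (C : Matrix n m K) (D : Matrix n n K) [Invertible A] :
    (fromBlocks A B C D).rank = Fintype.card m + (D - C * ⅟A * B).rank := by
  rw [fromBlocks_eq_of_invertible₁₁, rank_mul_eq_left_of_isUnit_det,
    rank_mul_eq_right_of_isUnit_det, rank_fromBlocks_zero_zero,
    rank_of_isUnit _ (isUnit_of_invertible A)] <;> simp

theorem eq_of_rank_fromBlocks_le_card (A : Matrix m m K) (B : Matrix m n K)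
    (C : Matrix n m K) (D : Matrix n n K) [Invertible A]
    (h : (fromBlocks A B C D).rank ≤ Fintype.card m) :
    D = C * ⅟A * B := by
  rw [rank_fromBlocks_of_invertible₁₁] at h
  exact sub_eq_zero.mp (eq_zero_of_rank_eq_zero (by omega))

end Field

end Matrix

theorem rankr_flammia_strictly_complete_general {p m : ℕ}
    (A : Matrix (Fin p) (Fin p) ℂ) (B : Matrix (Fin m) (Fin p) ℂ)
    (C D : Matrix (Fin m) (Fin m) ℂ)
    (hA : IsUnit A)
    (hrank : (Matrix.fromBlocks A Bᴴ B C).rank ≤ p)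
    (hσ : (Matrix.fromBlocks A Bᴴ B D).PosSemidef)
    (htr : (Matrix.fromBlocks A Bᴴ B D).trace = (Matrix.fromBlocks A Bᴴ B C).trace) :
    Matrix.fromBlocks A Bᴴ B D = Matrix.fromBlocks A Bᴴ B C := by
  have := hA.invertible
  have hApd : A.PosDef := (PosSemidef.posDef_iff_isUnit (hσ.submatrix Sum.inl)).mpr hA
  have hC : C = B * A⁻¹ * Bᴴ := by
    simpa using eq_of_rank_fromBlocks_le_card A Bᴴ B C (by simpa using hrank)
  have hDC : (D - C).PosSemidef := by
    simpa [hC] using (hApd.fromBlocks₁₁ Bᴴ D).mp (by rwa [conjTranspose_conjTranspose])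
  rw [trace_fromBlocks, trace_fromBlocks, add_right_inj, ← sub_eq_zero, ← trace_sub,
    hDC.trace_eq_zero_iff, sub_eq_zero] at htr
  rw [htr]

/-- **Strict-completeness of the rank-r Flammia-type measurement (matrix form).**
Let `ρ = [[A, B†],[B, C]]` be PSD with invertible leading block `A` and `rank ρ ≤ p`.
If `σ = [[A, B†],[B, D]]` is PSD (it agrees with `ρ` on the first `p` rows and columns)
and `Tr σ = Tr ρ`, then `σ = ρ`, i.e. `D = C`. -/
theorem rankr_flammia_strictly_complete {p m : ℕ}
    (A : Matrix (Fin p) (Fin p) ℂ) (B : Matrix (Fin m) (Fin p) ℂ)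
    (C D : Matrix (Fin m) (Fin m) ℂ)
    (hA : IsUnit A)
    (hρ : (Matrix.fromBlocks A Bᴴ B C).PosSemidef)
    (hrank : (Matrix.fromBlocks A Bᴴ B C).rank ≤ p)
    (hσ : (Matrix.fromBlocks A Bᴴ B D).PosSemidef)
    (htr : (Matrix.fromBlocks A Bᴴ B D).trace = (Matrix.fromBlocks A Bᴴ B C).trace) :
    Matrix.fromBlocks A Bᴴ B D = Matrix.fromBlocks A Bᴴ B C :=
  rankr_flammia_strictly_complete_general A B C D hA hrank hσ htr
end

section
/- The Flammia POVM is rank-1 complete: Let d ≥ 2, a, b > 0, and let ψ, φ ∈ ℂ^d be unit vectors with ψ_0 ≠ 0. If Tr(E · ψψ†) = Tr(E · φφ†) for every E among E_0 = a·e_0e_0†, E_k = b(𝟙 + e_0e_k† + e_ke_0†), and Ẽ_k = b(𝟙 − i·e_0e_k† + i·e_ke_0†) for k = 1, …, d−1, then ψψ† = φφ† (equivalently φ = c·ψ for some c ∈ ℂ with |c| = 1). -/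
/-!
Measuring against `E₀` reads off the pivot entry `(ψψ†)₀₀ = |ψ₀|²`. Since both states have unit
trace, `E_k` and `Ẽ_k` read off the real and imaginary parts of `(ψψ†)₀ₖ`, i.e. the whole row and
column through the pivot. A rank-one matrix with nonzero pivot is determined by that row and
column, because `(ψψ†)_{jk} (ψψ†)₀₀ = (ψψ†)_{j0} (ψψ†)_{0k}`.
-/

open Matrix

/-- The rank-one (outer-product) matrix `ψψ†`, with entries `ψ_j · conj(ψ_k)`. -/
noncomputable def outerProd {n : Type*} (ψ : n → ℂ) : Matrix n n ℂ :=
  Matrix.of fun j k => ψ j * star (ψ k)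

section

variable {n : Type*}

theorem outerProd_apply (ψ : n → ℂ) (j k : n) : outerProd ψ j k = ψ j * star (ψ k) := rfl

theorem trace_outerProd [Fintype n] (ψ : n → ℂ) :
    (outerProd ψ).trace = ((∑ j, ‖ψ j‖ ^ 2 : ℝ) : ℂ) := by
  simp only [trace, diag, outerProd_apply, Complex.star_def, Complex.mul_conj', Complex.ofReal_sum,
    Complex.ofReal_pow]

theorem outerProd_apply_mul_apply_self (ψ : n → ℂ) (i j k : n) :
    outerProd ψ j k * outerProd ψ i i = outerProd ψ j i * outerProd ψ i k := by
  simp only [outerProd_apply]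
  ring

theorem outerProd_eq_of_row_col_eq {ψ φ : n → ℂ} (i : n) (hψi : ψ i ≠ 0)
    (hrow : ∀ k, outerProd ψ i k = outerProd φ i k)
    (hcol : ∀ j, outerProd ψ j i = outerProd φ j i) :
    outerProd ψ = outerProd φ := by
  have hpivot : outerProd ψ i i ≠ 0 := mul_ne_zero hψi (star_ne_zero.mpr hψi)
  ext j k
  apply mul_right_cancel₀ hpivot
  calc outerProd ψ j k * outerProd ψ i i
      = outerProd ψ j i * outerProd ψ i k := outerProd_apply_mul_apply_self ψ i j k
    _ = outerProd φ j i * outerProd φ i k := by rw [hcol, hrow]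
    _ = outerProd φ j k * outerProd φ i i := (outerProd_apply_mul_apply_self φ i j k).symm
    _ = outerProd φ j k * outerProd ψ i i := by rw [hrow]

end

section

variable {n : Type*} [Fintype n] [DecidableEq n]

/-- `E_k = b(𝟙 + e₀e_k† + e_ke₀†)`, with `c = b` and pivot index `i = 0`. -/
def flammiaE (c : ℂ) (i k : n) : Matrix n n ℂ :=
  c • (1 + single i k 1 + single k i 1)

/-- `Ẽ_k = b(𝟙 − i·e₀e_k† + i·e_ke₀†)`, with `c = b` and pivot index `i = 0`. -/
def flammiaETilde (c : ℂ) (i k : n) : Matrix n n ℂ :=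
  c • (1 - Complex.I • single i k 1 + Complex.I • single k i 1)

theorem trace_flammiaE_mul (c : ℂ) (i k : n) (M : Matrix n n ℂ) :
    (flammiaE c i k * M).trace = c * (M.trace + M k i + M i k) := by
  simp only [flammiaE, smul_mul, add_mul, one_mul, trace_smul, trace_add, trace_single_mul,
    smul_eq_mul]

theorem trace_flammiaETilde_mul (c : ℂ) (i k : n) (M : Matrix n n ℂ) :
    (flammiaETilde c i k * M).trace = c * (M.trace - Complex.I * M k i + Complex.I * M i k) := by
  simp only [flammiaETilde, smul_mul, add_mul, sub_mul, one_mul, trace_smul, trace_add, trace_sub,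
    trace_single_mul, smul_eq_mul]

theorem apply_eq_of_trace_single_smul_mul_eq {M N : Matrix n n ℂ} {c : ℂ} (hc : c ≠ 0) {i j : n}
    (h : ((c • single i j 1) * M).trace = ((c • single i j 1) * N).trace) : M j i = N j i := by
  simpa only [smul_mul, trace_smul, trace_single_mul, smul_eq_mul, one_mul,
    mul_right_inj' hc] using h

theorem apply_eq_of_trace_flammiaE_mul_eq {M N : Matrix n n ℂ} {c : ℂ} (hc : c ≠ 0)
    (htr : M.trace = N.trace) {i k : n}
    (hE : (flammiaE c i k * M).trace = (flammiaE c i k * N).trace)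
    (hEt : (flammiaETilde c i k * M).trace = (flammiaETilde c i k * N).trace) :
    M i k = N i k ∧ M k i = N k i := by
  rw [trace_flammiaE_mul, trace_flammiaE_mul, htr, mul_right_inj' hc] at hE
  rw [trace_flammiaETilde_mul, trace_flammiaETilde_mul, htr, mul_right_inj' hc] at hEt
  have hsum : M k i + M i k = N k i + N i k := by linear_combination hE
  have hdiff : M k i - M i k = N k i - N i k := by
    linear_combination Complex.I * hEt + (M k i - M i k - N k i + N i k) * Complex.I_sq
  exact ⟨by linear_combination (hsum - hdiff) / 2, by linear_combination (hsum + hdiff) / 2⟩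

end

/-- **The Flammia POVM is rank-1 complete.** If two unit vectors `ψ, φ` with `ψ₀ ≠ 0` give the
same traces against `E₀ = a·e₀e₀†`, `E_k = b(𝟙 + e₀e_k† + e_ke₀†)` and
`Ẽ_k = b(𝟙 − i e₀e_k† + i e_ke₀†)` (k = 1,…,d−1), then `ψψ† = φφ†`. -/
theorem flammia_rank1_complete (d : ℕ) (hd : 2 ≤ d) (a b : ℝ) (ha : 0 < a) (hb : 0 < b)
    (ψ φ : Fin d → ℂ)
    (hψ : ∑ j, ‖ψ j‖ ^ 2 = 1) (hφ : ∑ j, ‖φ j‖ ^ 2 = 1)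
    (hψ0 : ψ ⟨0, by omega⟩ ≠ 0)
    (h0 : (((a : ℂ) • Matrix.single (⟨0, by omega⟩ : Fin d) (⟨0, by omega⟩ : Fin d) 1)
            * outerProd ψ).trace
        = (((a : ℂ) • Matrix.single (⟨0, by omega⟩ : Fin d) (⟨0, by omega⟩ : Fin d) 1)
            * outerProd φ).trace)
    (hE : ∀ k : Fin d, k ≠ ⟨0, by omega⟩ →
      (((b : ℂ) • ((1 : Matrix (Fin d) (Fin d) ℂ)
          + Matrix.single (⟨0, by omega⟩ : Fin d) k 1
          + Matrix.single k (⟨0, by omega⟩ : Fin d) 1)) * outerProd ψ).trace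
        = (((b : ℂ) • ((1 : Matrix (Fin d) (Fin d) ℂ)
          + Matrix.single (⟨0, by omega⟩ : Fin d) k 1
          + Matrix.single k (⟨0, by omega⟩ : Fin d) 1)) * outerProd φ).trace)
    (hEt : ∀ k : Fin d, k ≠ ⟨0, by omega⟩ →
      (((b : ℂ) • ((1 : Matrix (Fin d) (Fin d) ℂ)
          - Complex.I • Matrix.single (⟨0, by omega⟩ : Fin d) k 1
          + Complex.I • Matrix.single k (⟨0, by omega⟩ : Fin d) 1)) * outerProd ψ).trace
        = (((b : ℂ) • ((1 : Matrix (Fin d) (Fin d) ℂ)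
          - Complex.I • Matrix.single (⟨0, by omega⟩ : Fin d) k 1
          + Complex.I • Matrix.single k (⟨0, by omega⟩ : Fin d) 1)) * outerProd φ).trace) :
    outerProd ψ = outerProd φ := by
  set i : Fin d := ⟨0, by omega⟩
  have hpivot : outerProd ψ i i = outerProd φ i i :=
    apply_eq_of_trace_single_smul_mul_eq (by exact_mod_cast ha.ne') h0
  have htr : (outerProd ψ).trace = (outerProd φ).trace := by
    rw [trace_outerProd, trace_outerProd, hψ, hφ]
  have hoff : ∀ k, k ≠ i →
      outerProd ψ i k = outerProd φ i k ∧ outerProd ψ k i = outerProd φ k i := fun k hk =>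
    apply_eq_of_trace_flammiaE_mul_eq (by exact_mod_cast hb.ne') htr (hE k hk) (hEt k hk)
  refine outerProd_eq_of_row_col_eq i hψ0 (fun k => ?_) (fun j => ?_)
  · obtain rfl | hk := eq_or_ne k i
    exacts [hpivot, (hoff k hk).1]
  · obtain rfl | hj := eq_or_ne j i
    exacts [hpivot, (hoff j hj).2]
end

section
/- A pure state is determined among all PSD matrices by its diagonal and first off-diagonal (the core of the proof that the five Gell-Mann bases and the PSI POVM are rank-1 strictly-complete): Let d ≥ 1 and let ψ ∈ ℂ^d satisfy ψ_j ≠ 0 for every index j with 1 ≤ j ≤ d−2. If σ is a PSD d×d matrix with σ_{jj} = |ψ_j|² for all j = 0, …, d−1 and σ_{j,j+1} = ψ_j · conj(ψ_{j+1}) for all j = 0, …, d−2, then σ = ψψ†. -/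
open Matrix
open scoped ComplexOrder

/-!
Factor `σ` as the Gram matrix of vectors `v j`, so that `‖v j‖ = ‖ψ j‖` and
`⟪v j, v (j+1)⟫ = ψ j * conj (ψ (j+1))`. This is the equality case of Cauchy–Schwarz, which
forces `conj (ψ (j+1)) • v j = conj (ψ j) • v (j+1)`; dividing by the nonzero `ψ m` at an
interior index `m` propagates `⟪v j, v k⟫ = ψ j * conj (ψ k)` from `k = j + 1` to all `k ≥ j`,
and Hermitian symmetry gives the lower triangle.
-/

open scoped InnerProductSpace ComplexConjugate

theorem Matrix.PosSemidef.exists_eq_gram {𝕜 n : Type*} [RCLike 𝕜] [Fintype n]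
    {A : Matrix n n 𝕜} (hA : A.PosSemidef) :
    ∃ v : n → EuclideanSpace 𝕜 n, A = gram 𝕜 v := by
  classical
  open scoped MatrixOrder in
  obtain ⟨B, rfl⟩ := CStarAlgebra.nonneg_iff_eq_star_mul_self.mp hA.nonneg
  refine ⟨fun j => WithLp.toLp 2 fun i => B i j, ?_⟩
  ext j k
  simp [gram_apply, mul_apply, PiLp.inner_apply, mul_comm]

section InnerProductSpace

variable {𝕜 E : Type*} [RCLike 𝕜] [NormedAddCommGroup E] [InnerProductSpace 𝕜 E]

theorem conj_smul_eq_conj_smul_of_inner_eq {x y : E} {a b : 𝕜} (hx : ‖x‖ = ‖a‖) (hy : ‖y‖ = ‖b‖)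
    (hxy : ⟪x, y⟫_𝕜 = a * conj b) : conj b • x = conj a • y := by
  rw [← sub_eq_zero, ← inner_self_eq_zero (𝕜 := 𝕜)]
  have hyx : ⟪y, x⟫_𝕜 = b * conj a := by rw [← inner_conj_symm, hxy]; simp [mul_comm]
  -- the three terms of the expansion are `‖a‖²‖b‖²` times `1`, `-2` and `1`
  simp only [inner_sub_left, inner_sub_right, inner_smul_left, inner_smul_right, hxy, hyx,
    inner_self_eq_norm_sq_to_K x, inner_self_eq_norm_sq_to_K y, hx, hy, RCLike.conj_conj,
    ← RCLike.mul_conj]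
  ring

theorem inner_eq_mul_conj_trans {x y z : E} {a b c : 𝕜} (hx : ‖x‖ = ‖a‖) (hy : ‖y‖ = ‖b‖)
    (hb : b ≠ 0) (hxy : ⟪x, y⟫_𝕜 = a * conj b) (hyz : ⟪y, z⟫_𝕜 = b * conj c) :
    ⟪x, z⟫_𝕜 = a * conj c := by
  have h := congrArg (⟪·, z⟫_𝕜) (conj_smul_eq_conj_smul_of_inner_eq hx hy hxy)
  simp only [inner_smul_left, RCLike.conj_conj, hyz] at h
  exact mul_left_cancel₀ hb (by rw [h]; ring)

theorem inner_eq_mul_conj_of_le {n : ℕ} (v : Fin n → E) (a : Fin n → 𝕜)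
    (hnorm : ∀ j, ‖v j‖ = ‖a j‖)
    (hstep : ∀ j : ℕ, (h : j + 1 < n) →
      ⟪v ⟨j, Nat.lt_of_succ_lt h⟩, v ⟨j + 1, h⟩⟫_𝕜 =
        a ⟨j, Nat.lt_of_succ_lt h⟩ * conj (a ⟨j + 1, h⟩))
    (hne : ∀ j : Fin n, 0 < (j : ℕ) → (j : ℕ) + 1 < n → a j ≠ 0) {j k : Fin n} (hjk : j ≤ k) :
    ⟪v j, v k⟫_𝕜 = a j * conj (a k) := by
  obtain ⟨k, hk⟩ := k
  induction k, (show (j : ℕ) ≤ k from hjk) using Nat.le_induction with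
  | base => rw [inner_self_eq_norm_sq_to_K, hnorm, RCLike.mul_conj]
  | succ m hjm ih =>
    rcases hjm.eq_or_lt with rfl | hlt
    · exact hstep j hk
    · have hm : 0 < m := by omega
      exact inner_eq_mul_conj_trans (hnorm j) (hnorm _) (hne ⟨m, by omega⟩ hm hk)
        (ih (by omega) (Fin.mk_le_mk.mpr hjm)) (hstep m hk)

end InnerProductSpace

theorem Matrix.IsHermitian.ext_of_le {α n : Type*} [InvolutiveStar α] [LinearOrder n]
    {A B : Matrix n n α} (hA : A.IsHermitian) (hB : B.IsHermitian)
    (h : ∀ j k, j ≤ k → A j k = B j k) : A = B := by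
  ext j k
  rcases le_total j k with hjk | hkj
  · exact h j k hjk
  · rw [← hA.apply, ← hB.apply, h k j hkj]

theorem isHermitian_outerProd {n : Type*} (ψ : n → ℂ) : (outerProd ψ).IsHermitian := by
  ext j k
  simp [outerProd, mul_comm]

/-- **A pure state is determined among all PSD matrices by its diagonal and first
off-diagonal.** Let `ψ ∈ ℂ^d` (d ≥ 1) with `ψ_j ≠ 0` for all `1 ≤ j ≤ d−2`. If `σ` is PSD
with `σ_{jj} = |ψ_j|²` for all `j` and `σ_{j,j+1} = ψ_j conj(ψ_{j+1})` for `j = 0,…,d−2`,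
then `σ = ψψ†`. -/
theorem pure_state_from_tridiagonal (d : ℕ) (ψ : Fin d → ℂ)
    (hψ : ∀ j : ℕ, ∀ _h1 : 1 ≤ j, ∀ _h2 : j ≤ d - 2, ψ ⟨j, by omega⟩ ≠ 0)
    (σ : Matrix (Fin d) (Fin d) ℂ) (hσ : σ.PosSemidef)
    (hdiag : ∀ j : Fin d, σ j j = (‖ψ j‖ ^ 2 : ℝ))
    (hoff : ∀ j : ℕ, (h : j + 1 < d) →
      σ ⟨j, by omega⟩ ⟨j + 1, h⟩ = ψ ⟨j, by omega⟩ * star (ψ ⟨j + 1, h⟩)) :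
    σ = outerProd ψ := by
  obtain ⟨v, rfl⟩ := hσ.exists_eq_gram
  have hnorm : ∀ j, ‖v j‖ = ‖ψ j‖ := fun j => by
    have h := congrArg RCLike.re (hdiag j)
    rw [gram_apply, ← norm_sq_eq_re_inner, RCLike.re_to_complex, Complex.ofReal_re] at h
    exact (pow_left_inj₀ (norm_nonneg _) (norm_nonneg _) two_ne_zero).mp h
  refine hσ.isHermitian.ext_of_le (isHermitian_outerProd ψ) fun j k hjk => ?_
  exact inner_eq_mul_conj_of_le v ψ hnorm hoff (fun j h0 h1 => hψ j h0 (by omega)) hjk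
end

section
/- The two-state set S = {ρ_0, |+⟩⟨+|} is unitarily informationally complete: Let d ≥ 1, let λ_0, …, λ_{d−1} be distinct real numbers, let ρ_0 = diag(λ_0, …, λ_{d−1}) be the corresponding diagonal matrix, and let u = (1/√d)·(e_0 + ⋯ + e_{d−1}). If U and V are d×d unitary matrices with U ρ_0 U† = V ρ_0 V† and U (uu†) U† = V (uu†) V†, then U = c·V for some c ∈ ℂ with |c| = 1. -/
open Matrix

/-!
Put `W = V† U`. Both hypotheses say that the unitary `W` commutes with the state in question.
Commuting with a diagonal matrix with distinct eigenvalues forces `W` to be diagonal, and a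
diagonal matrix commutes with `uu†` only if its diagonal is constant, because every entry of `u`
is nonzero. So `W = c • 1`, unitarity gives `‖c‖ = 1`, and `U = V W = c • V`.
-/

theorem commute_of_conj_eq {M : Type*} [Monoid M] {u u' v v' a : M} (hu : u' * u = 1)
    (hv : v' * v = 1) (h : u * a * u' = v * a * v') : Commute (v' * u) a :=
  calc v' * u * a = v' * (u * a * u') * u := by simp only [mul_assoc, hu, mul_one]
    _ = v' * (v * a * v') * u := by rw [h]
    _ = a * (v' * u) := by simp only [← mul_assoc, hv, one_mul]

namespace Matrix

variable {n : Type*} [DecidableEq n]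

theorem isDiag_of_commute_diagonal [Fintype n] {R : Type*} [CommRing R] [NoZeroDivisors R]
    {v : n → R} (hv : Function.Injective v) {A : Matrix n n R} (h : Commute A (diagonal v)) :
    A.IsDiag := by
  intro i j hij
  have hentry : A i j * v j = v i * A i j := by
    simpa only [mul_diagonal, diagonal_mul] using congrFun (congrFun h.eq i) j
  have hprod : (v j - v i) * A i j = 0 := by linear_combination hentry
  exact (mul_eq_zero.mp hprod).resolve_left (sub_ne_zero.mpr (hv.ne hij).symm)

theorem diag_const_of_commute_outerProd [Fintype n] {w ψ : n → ℂ} (hψ : ∀ i, ψ i ≠ 0)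
    (h : Commute (diagonal w) (outerProd ψ)) (i j : n) : w i = w j := by
  have hentry : w i * (ψ i * star (ψ j)) = ψ i * star (ψ j) * w j := by
    simpa only [mul_diagonal, diagonal_mul, outerProd, of_apply]
      using congrFun (congrFun h.eq i) j
  have hψψ : ψ i * star (ψ j) ≠ 0 := mul_ne_zero (hψ i) (star_ne_zero.mpr (hψ j))
  exact mul_left_cancel₀ hψψ (by linear_combination hentry)

theorem norm_eq_one_of_diagonal_unitary [Fintype n] {w : n → ℂ}
    (h : (diagonal w)ᴴ * diagonal w = 1) (i : n) : ‖w i‖ = 1 := by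
  have hentry : star (w i) * w i = 1 := by
    simpa only [diagonal_conjTranspose, diagonal_mul_diagonal, diagonal_apply_eq, Pi.star_apply,
      one_apply_eq]
      using congrFun (congrFun h i) i
  have hsq : ‖w i‖ ^ 2 = 1 := by exact_mod_cast (Complex.conj_mul' (w i)).symm.trans hentry
  exact (pow_eq_one_iff_of_nonneg (norm_nonneg _) two_ne_zero).mp hsq

theorem exists_diagonal_eq_smul_one {w : n → ℂ} (hconst : ∀ i j, w i = w j)
    (hnorm : ∀ i, ‖w i‖ = 1) : ∃ c : ℂ, ‖c‖ = 1 ∧ diagonal w = c • 1 := by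
  rcases isEmpty_or_nonempty n with hn | hn
  · exact ⟨1, norm_one, Subsingleton.elim _ _⟩
  · obtain ⟨i⟩ := hn
    refine ⟨w i, hnorm i, ?_⟩
    rw [smul_one_eq_diagonal]
    exact congrArg diagonal (funext (hconst · i))

end Matrix

theorem two_state_UIC_general (d : ℕ) (l : Fin d → ℝ) (hl : Function.Injective l)
    (U V : Matrix (Fin d) (Fin d) ℂ) (hU : Uᴴ * U = 1) (hV : Vᴴ * V = 1)
    (h1 : U * Matrix.diagonal (fun i => (l i : ℂ)) * Uᴴ
        = V * Matrix.diagonal (fun i => (l i : ℂ)) * Vᴴ)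
    (h2 : U * outerProd (fun _ : Fin d => ((1 / Real.sqrt d : ℝ) : ℂ)) * Uᴴ
        = V * outerProd (fun _ : Fin d => ((1 / Real.sqrt d : ℝ) : ℂ)) * Vᴴ) :
    ∃ c : ℂ, ‖c‖ = 1 ∧ U = c • V := by
  have hVV : V * Vᴴ = 1 := mul_eq_one_comm.mp hV
  have hu (i : Fin d) : ((1 / Real.sqrt d : ℝ) : ℂ) ≠ 0 :=
    Complex.ofReal_ne_zero.mpr (one_div_ne_zero (Real.sqrt_ne_zero'.mpr (Nat.cast_pos.mpr i.pos)))
  have hWdiag : diagonal (Vᴴ * U).diag = Vᴴ * U :=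
    (isDiag_of_commute_diagonal (Complex.ofReal_injective.comp hl)
      (commute_of_conj_eq hU hV h1)).diagonal_diag
  have hconst := diag_const_of_commute_outerProd hu (hWdiag ▸ commute_of_conj_eq hU hV h2)
  have hnorm := norm_eq_one_of_diagonal_unitary (w := (Vᴴ * U).diag) <| by
    rw [hWdiag, conjTranspose_mul, conjTranspose_conjTranspose, mul_assoc, ← mul_assoc V, hVV,
      one_mul, hU]
  obtain ⟨c, hc, hWc⟩ := exists_diagonal_eq_smul_one hconst hnorm
  refine ⟨c, hc, ?_⟩
  calc U = V * (Vᴴ * U) := by rw [← mul_assoc, hVV, one_mul]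
    _ = c • V := by rw [← hWdiag, hWc, Matrix.mul_smul, mul_one]

/-- **The two-state set `S = {ρ₀, |+⟩⟨+|}` is unitarily informationally complete.**
If `ρ₀ = diag(λ₀,…,λ_{d−1})` with distinct real `λ_i`, and `u = (1/√d)(e₀+⋯+e_{d−1})`,
then any two unitaries `U, V` conjugating `ρ₀` and `uu†` identically agree up to a
global phase. -/
theorem two_state_UIC (d : ℕ) (hd : 1 ≤ d) (l : Fin d → ℝ) (hl : Function.Injective l)
    (U V : Matrix (Fin d) (Fin d) ℂ) (hU : Uᴴ * U = 1) (hV : Vᴴ * V = 1)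
    (h1 : U * Matrix.diagonal (fun i => (l i : ℂ)) * Uᴴ
        = V * Matrix.diagonal (fun i => (l i : ℂ)) * Vᴴ)
    (h2 : U * outerProd (fun _ : Fin d => ((1 / Real.sqrt d : ℝ) : ℂ)) * Uᴴ
        = V * outerProd (fun _ : Fin d => ((1 / Real.sqrt d : ℝ) : ℂ)) * Vᴴ) :
    ∃ c : ℂ, ‖c‖ = 1 ∧ U = c • V :=
  two_state_UIC_general d l hl U V hU hV h1 h2
end

section
/- The pure-state set {|0⟩, (|0⟩+|n⟩)/√2} is unitarily informationally complete: Let d ≥ 1 and define ψ_0 = e_0 and ψ_n = (e_0 + e_n)/√2 for n = 1, …, d−1. If U and V are d×d unitary matrices satisfying U (ψ_n ψ_n†) U† = V (ψ_n ψ_n†) V† for all n = 0, …, d−1, then U = c·V for some c ∈ ℂ with |c| = 1. -/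
open Matrix

/-- The probe states `ψ₀ = e₀` and `ψ_n = (e₀ + e_n)/√2` for `n = 1,…,d−1`. -/
noncomputable def probeState {d : ℕ} (n : Fin d) : Fin d → ℂ :=
  if (n : ℕ) = 0 then (fun j => if (j : ℕ) = 0 then 1 else 0)
  else fun j => if (j : ℕ) = 0 ∨ j = n then ((1 / Real.sqrt 2 : ℝ) : ℂ) else 0

section aux

variable {d : ℕ} [NeZero d]

lemma fin_val_zero (j : Fin d) : (j : ℕ) = 0 ↔ j = 0 := by
  rw [Fin.ext_iff, Fin.val_zero]

lemma probeState_zero (j : Fin d) :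
    probeState (0 : Fin d) j = if j = 0 then 1 else 0 := by
  simp [probeState, fin_val_zero]

lemma probeState_ne_zero {n : Fin d} (hn : n ≠ 0) (j : Fin d) :
    probeState n j = if j = 0 ∨ j = n then ((1 / Real.sqrt 2 : ℝ) : ℂ) else 0 := by
  have hn' : (n : ℕ) ≠ 0 := by simpa [fin_val_zero] using hn
  simp [probeState, hn', fin_val_zero]

lemma mul_outerProd_apply (W : Matrix (Fin d) (Fin d) ℂ) (ψ : Fin d → ℂ) (j k : Fin d) :
    (W * outerProd ψ) j k = (∑ l, W j l * ψ l) * star (ψ k) := by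
  simp [Matrix.mul_apply, outerProd, Finset.sum_mul, mul_assoc]

lemma outerProd_mul_apply (W : Matrix (Fin d) (Fin d) ℂ) (ψ : Fin d → ℂ) (j k : Fin d) :
    (outerProd ψ * W) j k = ψ j * ∑ l, star (ψ l) * W l k := by
  simp [Matrix.mul_apply, outerProd, Finset.mul_sum, mul_assoc]

lemma sum_ite_or {n : Fin d} (hn : n ≠ 0) (f : Fin d → ℂ) (a : ℂ) :
    ∑ l : Fin d, f l * (if l = 0 ∨ l = n then a else 0) = a * f 0 + a * f n := by
  have h1 : ∀ l : Fin d, f l * (if l = 0 ∨ l = n then a else 0)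
      = (if l = 0 then a * f l else 0) + (if l = n then a * f l else 0) := by
    intro l
    by_cases h1 : l = 0 <;> by_cases h2 : l = n <;> simp_all [mul_comm]
  rw [Finset.sum_congr rfl fun l _ => h1 l, Finset.sum_add_distrib]
  simp [Finset.sum_ite_eq']

lemma sum_or_ite {n : Fin d} (hn : n ≠ 0) (f : Fin d → ℂ) (a : ℂ) :
    ∑ l : Fin d, (if l = 0 ∨ l = n then a else 0) * f l = a * f 0 + a * f n := by
  have h1 : ∀ l : Fin d, (if l = 0 ∨ l = n then a else 0) * f l
      = (if l = 0 then a * f l else 0) + (if l = n then a * f l else 0) := by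
    intro l
    by_cases h1 : l = 0 <;> by_cases h2 : l = n <;> simp_all [mul_comm]
  rw [Finset.sum_congr rfl fun l _ => h1 l, Finset.sum_add_distrib]
  simp [Finset.sum_ite_eq']

lemma sum_mul_probe {n : Fin d} (hn : n ≠ 0) (f : Fin d → ℂ) :
    ∑ l, f l * probeState n l
      = ((1 / Real.sqrt 2 : ℝ) : ℂ) * f 0 + ((1 / Real.sqrt 2 : ℝ) : ℂ) * f n := by
  simp_rw [probeState_ne_zero hn]
  exact sum_ite_or hn f _

lemma sum_star_probe {n : Fin d} (hn : n ≠ 0) (f : Fin d → ℂ) :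
    ∑ l, star (probeState n l) * f l
      = ((1 / Real.sqrt 2 : ℝ) : ℂ) * f 0 + ((1 / Real.sqrt 2 : ℝ) : ℂ) * f n := by
  simp_rw [probeState_ne_zero hn, apply_ite (star : ℂ → ℂ), star_zero,
    Complex.star_def, Complex.conj_ofReal]
  exact sum_or_ite hn f _

lemma probe_zero_val {n : Fin d} (hn : n ≠ 0) :
    probeState n 0 = ((1 / Real.sqrt 2 : ℝ) : ℂ) := by
  simp [probeState_ne_zero hn]

lemma probe_n_val {n : Fin d} (hn : n ≠ 0) :
    probeState n n = ((1 / Real.sqrt 2 : ℝ) : ℂ) := by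
  simp [probeState_ne_zero hn]

lemma probe_other_val {n j : Fin d} (hn : n ≠ 0) (hj0 : j ≠ 0) (hjn : j ≠ n) :
    probeState n j = 0 := by
  simp [probeState_ne_zero hn, hj0, hjn]

end aux

/-- **The pure-state set `{|0⟩, (|0⟩+|n⟩)/√2}` is unitarily informationally complete.**
Any two unitaries conjugating every `ψ_n ψ_n†` identically agree up to a global phase. -/
theorem zero_plus_n_UIC (d : ℕ) (hd : 1 ≤ d)
    (U V : Matrix (Fin d) (Fin d) ℂ) (hU : Uᴴ * U = 1) (hV : Vᴴ * V = 1)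
    (h : ∀ n : Fin d,
      U * outerProd (probeState n) * Uᴴ = V * outerProd (probeState n) * Vᴴ) :
    ∃ c : ℂ, ‖c‖ = 1 ∧ U = c • V := by
  haveI : NeZero d := ⟨by omega⟩
  set a : ℂ := ((1 / Real.sqrt 2 : ℝ) : ℂ) with ha_def
  have ha : a ≠ 0 := by
    have h2 : (0:ℝ) < 1 / Real.sqrt 2 := by positivity
    simp only [ha_def, ne_eq, Complex.ofReal_eq_zero]
    exact h2.ne'
  have hstar : star a = a := by
    rw [ha_def]; simp [Complex.star_def, Complex.conj_ofReal]
  have hVV : V * Vᴴ = 1 := mul_eq_one_comm.mp hV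
  set W : Matrix (Fin d) (Fin d) ℂ := Vᴴ * U with hW_def
  have hWH : Wᴴ = Uᴴ * V := by
    simp [hW_def, Matrix.conjTranspose_mul]
  have hWW : Wᴴ * W = 1 := by
    rw [hWH, hW_def]
    calc Uᴴ * V * (Vᴴ * U) = Uᴴ * (V * Vᴴ) * U := by
          simp [Matrix.mul_assoc]
      _ = 1 := by rw [hVV]; simp [hU]
  have key : ∀ n, W * outerProd (probeState n) * Wᴴ = outerProd (probeState n) := by
    intro n
    have e1 : W * outerProd (probeState n) * Wᴴ
        = Vᴴ * (U * outerProd (probeState n) * Uᴴ) * V := by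
      rw [hWH, hW_def]; simp [Matrix.mul_assoc]
    rw [e1, h n]
    calc Vᴴ * (V * outerProd (probeState n) * Vᴴ) * V
        = (Vᴴ * V) * outerProd (probeState n) * (Vᴴ * V) := by simp [Matrix.mul_assoc]
      _ = outerProd (probeState n) := by rw [hV]; simp
  have hcomm : ∀ n, W * outerProd (probeState n) = outerProd (probeState n) * W := by
    intro n
    have := congrArg (· * W) (key n)
    simpa [Matrix.mul_assoc, hWW] using this
  have F1 : ∀ j : Fin d, j ≠ 0 → W j 0 = 0 ∧ W 0 j = 0 := by
    intro j hj
    constructor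
    · have e := congrFun (congrFun (hcomm 0) j) 0
      rw [mul_outerProd_apply, outerProd_mul_apply] at e
      simp [probeState_zero, hj, Finset.sum_ite_eq'] at e
      exact e
    · have e := congrFun (congrFun (hcomm 0) 0) j
      rw [mul_outerProd_apply, outerProd_mul_apply] at e
      simp [probeState_zero, hj, Finset.sum_ite_eq'] at e
      exact e.symm
  set c : ℂ := W 0 0 with hc_def
  have hWc : W = c • (1 : Matrix (Fin d) (Fin d) ℂ) := by
    ext j k
    by_cases hjk : j = k
    · subst hjk
      by_cases hj : j = 0
      · subst hj; simp [hc_def]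
      · have e := congrFun (congrFun (hcomm j) 0) j
        rw [mul_outerProd_apply, outerProd_mul_apply, sum_mul_probe hj,
          sum_star_probe hj, probe_zero_val hj, probe_n_val hj, (F1 j hj).2, hstar] at e
        have e2 : a * a * W j j = a * a * c := by linear_combination -e
        have e3 : W j j = c := mul_left_cancel₀ (mul_ne_zero ha ha) e2
        simp [Matrix.one_apply, e3]
    · rw [Matrix.smul_apply, Matrix.one_apply_ne hjk, smul_zero]
      rcases eq_or_ne k 0 with hk0 | hk0
      · subst hk0
        exact (F1 j hjk).1
      · rcases eq_or_ne j 0 with hj0 | hj0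
        · subst hj0
          exact (F1 k (fun hh => hjk hh.symm)).2
        · have e := congrFun (congrFun (hcomm k) j) 0
          rw [mul_outerProd_apply, outerProd_mul_apply, sum_mul_probe hk0,
            probe_zero_val hk0, probe_other_val hk0 hj0 hjk, (F1 j hj0).1, hstar] at e
          simpa [ha, mul_eq_zero] using e
  have hcc : star c * c = 1 := by
    rw [hWc] at hWW
    simp only [Matrix.conjTranspose_smul, Matrix.conjTranspose_one, Matrix.smul_mul,
      Matrix.mul_smul, mul_one, smul_smul, Complex.star_def] at hWW
    have := congrFun (congrFun hWW 0) 0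
    simpa [Matrix.one_apply, Complex.star_def, mul_comm] using this
  have hnorm : ‖c‖ = 1 := by
    have h1 : ‖c‖ * ‖c‖ = 1 := by
      calc ‖c‖ * ‖c‖ = ‖star c * c‖ := by rw [norm_mul, norm_star]
        _ = 1 := by rw [hcc]; simp
    nlinarith [norm_nonneg c]
  refine ⟨c, hnorm, ?_⟩
  have hVW : V * W = U := by
    rw [hW_def, ← Matrix.mul_assoc, hVV, one_mul]
  rw [← hVW, hWc, Matrix.mul_smul, mul_one]
end

section
/- The pure-state set {|n⟩ (n ≤ d−2), |+⟩} is unitarily informationally complete: Let d ≥ 2, define ψ_n = e_n for n = 0, …, d−2 and ψ_{d−1} = (1/√d)·(e_0 + ⋯ + e_{d−1}). If U and V are d×d unitary matrices satisfying U (ψ_n ψ_n†) U† = V (ψ_n ψ_n†) V† for all n = 0, …, d−1, then U = c·V for some c ∈ ℂ with |c| = 1. -/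
open Matrix

/-- The probe states `ψ_n = e_n` for `n = 0,…,d−2` and `ψ_{d−1} = (1/√d)(e₀+⋯+e_{d−1})`. -/
noncomputable def basisPlusState (d : ℕ) (n : Fin d) : Fin d → ℂ :=
  if (n : ℕ) = d - 1 then (fun _ => ((1 / Real.sqrt d : ℝ) : ℂ))
  else fun j => if j = n then 1 else 0

theorem commute_star_mul_of_conj_eq {A : Type*} [Monoid A] [StarMul A] {U V P : A}
    (hU : U ∈ unitary A) (hV : V ∈ unitary A) (h : U * P * star U = V * P * star V) :
    Commute (star V * U) P :=
  calc star V * U * P = star V * (U * P * star U) * U := by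
        simp only [mul_assoc, Unitary.star_mul_self_of_mem hU, mul_one]
    _ = P * (star V * U) := by
        rw [h]; simp only [← mul_assoc, Unitary.star_mul_self_of_mem hV, one_mul]

namespace Matrix

variable {n α : Type*} [Fintype n] [DecidableEq n]

theorem apply_eq_zero_of_commute_single [NonAssocSemiring α] {W : Matrix n n α} {i j : n}
    (h : Commute W (single i i 1)) (hji : j ≠ i) : W j i = 0 ∧ W i j = 0 := by
  constructor
  · simpa [hji] using congrFun (congrFun h.eq j) i
  · simpa [hji] using (congrFun (congrFun h.eq i) j).symm

theorem apply_eq_of_commute_diagonal_vecMulVec [CommSemiring α] [IsCancelMulZero α]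
    {w x y : n → α} (h : Commute (diagonal w) (vecMulVec x y)) {j k : n}
    (hx : x j ≠ 0) (hy : y k ≠ 0) : w j = w k := by
  have := congrFun (congrFun h.eq j) k
  simp only [diagonal_mul, mul_diagonal, vecMulVec_apply] at this
  exact mul_left_cancel₀ (mul_ne_zero hx hy) (by rw [← this]; ring)

theorem smul_one_mem_unitary_iff [Nonempty n] [CommRing α] [StarRing α] {c : α} :
    c • (1 : Matrix n n α) ∈ unitary (Matrix n n α) ↔ c ∈ unitary α := by
  rw [mem_unitaryGroup_iff', Unitary.mem_iff_star_mul_self, star_smul, star_one,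
    smul_mul_smul_comm, one_mul, smul_one_eq_diagonal, ← diagonal_one, diagonal_eq_diagonal_iff]
  exact ⟨fun h => h (Classical.arbitrary n), fun h _ => h⟩

theorem exists_mem_unitary_eq_smul_one_of_isDiag [CommRing α] [StarRing α] {W : Matrix n n α}
    (hW : W ∈ unitary (Matrix n n α)) (hdiag : W.IsDiag) (hconst : ∀ j k, W j j = W k k) :
    ∃ c ∈ unitary α, W = c • 1 := by
  rcases isEmpty_or_nonempty n with _ | _
  · exact ⟨1, one_mem _, Subsingleton.elim _ _⟩
  · have hW_eq : W = W (Classical.arbitrary n) (Classical.arbitrary n) • 1 := by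
      conv_lhs => rw [← hdiag.diagonal_diag]
      rw [smul_one_eq_diagonal]
      exact congrArg diagonal (funext fun j => hconst j _)
    exact ⟨_, smul_one_mem_unitary_iff.mp (hW_eq ▸ hW), hW_eq⟩

end Matrix

theorem outerProd_eq_vecMulVec {n : Type*} (ψ : n → ℂ) : outerProd ψ = vecMulVec ψ (star ψ) :=
  rfl

theorem outerProd_basisPlusState_of_val_ne {d : ℕ} {n : Fin d} (hn : (n : ℕ) ≠ d - 1) :
    outerProd (basisPlusState d n) = single n n 1 := by
  have hψ : basisPlusState d n = Pi.single n 1 := by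
    rw [basisPlusState, if_neg hn]
    exact funext fun j => (Pi.single_apply n 1 j).symm
  rw [single_eq_single_vecMulVec_single, outerProd_eq_vecMulVec, hψ, ← Pi.single_star, star_one]

theorem basisPlusState_of_val_eq {d : ℕ} {n : Fin d} (hn : (n : ℕ) = d - 1) :
    basisPlusState d n = fun _ => ((1 / Real.sqrt d : ℝ) : ℂ) :=
  if_pos hn

theorem isDiag_of_commute_outerProd_basisPlusState {d : ℕ} {W : Matrix (Fin d) (Fin d) ℂ}
    (h : ∀ n, Commute W (outerProd (basisPlusState d n))) : W.IsDiag := by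
  intro j k hjk
  by_cases hk : (k : ℕ) = d - 1
  · have hj : (j : ℕ) ≠ d - 1 := fun hj => hjk (Fin.ext (hj.trans hk.symm))
    have hcomm := h j
    rw [outerProd_basisPlusState_of_val_ne hj] at hcomm
    exact (apply_eq_zero_of_commute_single hcomm (Ne.symm hjk)).2
  · have hcomm := h k
    rw [outerProd_basisPlusState_of_val_ne hk] at hcomm
    exact (apply_eq_zero_of_commute_single hcomm hjk).1

theorem apply_self_eq_of_commute_outerProd_basisPlusState {d : ℕ} {W : Matrix (Fin d) (Fin d) ℂ}
    (h : ∀ n, Commute W (outerProd (basisPlusState d n))) (j k : Fin d) : W j j = W k k := by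
  have hcomm := h ⟨d - 1, by have := j.isLt; omega⟩
  rw [← (isDiag_of_commute_outerProd_basisPlusState h).diagonal_diag, outerProd_eq_vecMulVec,
    basisPlusState_of_val_eq rfl] at hcomm
  have hd : (0 : ℝ) < d := by exact_mod_cast j.pos
  have hne : ((1 / Real.sqrt d : ℝ) : ℂ) ≠ 0 := Complex.ofReal_ne_zero.mpr (by positivity)
  exact apply_eq_of_commute_diagonal_vecMulVec hcomm hne (by simpa using hne)

theorem basis_plus_UIC_general (d : ℕ)
    (U V : Matrix (Fin d) (Fin d) ℂ) (hU : Uᴴ * U = 1) (hV : Vᴴ * V = 1)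
    (h : ∀ n : Fin d,
      U * outerProd (basisPlusState d n) * Uᴴ = V * outerProd (basisPlusState d n) * Vᴴ) :
    ∃ c : ℂ, ‖c‖ = 1 ∧ U = c • V := by
  have hUu : U ∈ unitary _ := mem_unitaryGroup_iff'.mpr hU
  have hVu : V ∈ unitary _ := mem_unitaryGroup_iff'.mpr hV
  have hcomm n := commute_star_mul_of_conj_eq hUu hVu (h n)
  obtain ⟨c, hc, hW⟩ :=
    exists_mem_unitary_eq_smul_one_of_isDiag (mul_mem (Unitary.star_mem hVu) hUu)
      (isDiag_of_commute_outerProd_basisPlusState hcomm)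
      (apply_self_eq_of_commute_outerProd_basisPlusState hcomm)
  refine ⟨c, CStarRing.norm_of_mem_unitary hc, ?_⟩
  calc U = V * (star V * U) := by rw [← mul_assoc, Unitary.mul_star_self_of_mem hVu, one_mul]
    _ = c • V := by rw [hW, mul_smul_comm, mul_one]

/-- **The pure-state set `{|n⟩ (n ≤ d−2), |+⟩}` is unitarily informationally complete.**
Any two unitaries conjugating every `ψ_n ψ_n†` identically agree up to a global phase. -/
theorem basis_plus_UIC (d : ℕ) (hd : 2 ≤ d)
    (U V : Matrix (Fin d) (Fin d) ℂ) (hU : Uᴴ * U = 1) (hV : Vᴴ * V = 1)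
    (h : ∀ n : Fin d,
      U * outerProd (basisPlusState d n) * Uᴴ = V * outerProd (basisPlusState d n) * Vᴴ) :
    ∃ c : ℂ, ‖c‖ = 1 ∧ U = c • V :=
  basis_plus_UIC_general d U V hU hV h
end
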